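/- Let Φ be a reduced root system and M a ℤ-module. The coboundary operator on root-system cochains satisfies dⁿ⁺¹ ∘ dⁿ = 0 as a map Cⁿ(Φ,M) → Cⁿ⁺²(Φ,M), for every n ≥ 1. -/

import Mathlib

open scoped RealInnerProductSpace

/-- A reduced root system `Φ` in a real inner product space `V`:
a finite set of nonzero vectors spanning `V`, closed under the reflections it determines,
with integral Cartan numbers, such that the only multiples of a root in `Φ` are `±α`. -/
structure ReducedRootSystem (V : Type) [NormedAddCommGroup V] [InnerProductSpace ℝ V] :
    Type where
  roots : Set V
  finite : roots.Finite
  nonzero : ∀ α ∈ roots, α ≠ 0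
  spans : Submodule.span ℝ roots = ⊤
  reflect_mem : ∀ α ∈ roots, ∀ β ∈ roots, β - (2 * ⟪β, α⟫ / ⟪α, α⟫) • α ∈ roots
  integral : ∀ α ∈ roots, ∀ β ∈ roots, ∃ n : ℤ, 2 * ⟪β, α⟫ / ⟪α, α⟫ = (n : ℝ)
  reduced : ∀ α ∈ roots, ∀ t : ℝ, t • α ∈ roots → t = 1 ∨ t = -1

variable {V : Type} [NormedAddCommGroup V] [InnerProductSpace ℝ V]

/-- `Φ₀ = Φ ∪ {0}`. -/
def rootsZero (Φ : ReducedRootSystem V) : Set V := insert 0 Φ.roots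

/-- Contraction of a tuple at position `j` (adding the `j`-th and `(j+1)`-st entries). -/
def contractAt (l : List V) (j : ℕ) : List V :=
  l.take j ++ (l.getD j 0 + l.getD (j + 1) 0) :: l.drop (j + 2)

/-- `IsRootChainAux Φ n l`: the tuple `l` of length `n` is a generator of `T_n(Φ)`:
`T₁(Φ) = Φ₀`, and an `n`-tuple with entries in `Φ₀` lies in `T_n(Φ)` iff all its
contractions lie in `T_{n-1}(Φ)`. -/
def IsRootChainAux (Φ : ReducedRootSystem V) : ℕ → List V → Prop
  | 0, _ => False
  | 1, l => ∃ r ∈ rootsZero Φ, l = [r]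
  | n + 2, l => l.length = n + 2 ∧ (∀ r ∈ l, r ∈ rootsZero Φ) ∧
      ∀ j, j + 1 < l.length → IsRootChainAux Φ (n + 1) (contractAt l j)

/-- `l` is a generator of `T_{l.length}(Φ)`. -/
def IsRootChain (Φ : ReducedRootSystem V) (l : List V) : Prop := IsRootChainAux Φ l.length l

open Classical in
/-- Evaluation of a cochain on a chain generator: tuples containing `0` are identified with
the zero chain `0ₙ`, on which any cochain vanishes. -/
noncomputable def chainEv {M : Type} [Zero M] (ω : List V → M) (l : List V) : M :=
  if (0 : V) ∈ l then 0 else ω l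

/-- The coboundary operator `dⁿ` on cochains, `dⁿωⁿ(r₀|⋯|rₙ) = ωⁿ(∂ⁿ[r₀|⋯|rₙ])`. -/
noncomputable def cobd {M : Type} [AddCommGroup M] (ω : List V → M) (l : List V) : M :=
  chainEv ω l.tail
    + (∑ j ∈ Finset.range (l.length - 1), ((-1 : ℤ) ^ (j + 1)) • chainEv ω (contractAt l j))
    - ((-1 : ℤ) ^ (l.length - 1)) • chainEv ω l.dropLast

/-! Write the boundary as `∂ = ∑ᵢ (-1)ⁱ ∂ᵢ`, where `∂₀` drops the first entry, `∂ₙ` the last one,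
and the middle faces add two adjacent entries. These faces satisfy the simplicial identities
`∂ᵢ ∂ⱼ = ∂ⱼ₋₁ ∂ᵢ` for `i < j`, so the terms of `d(dω)` cancel in pairs. Identifying tuples that
contain `0` with the zero chain is compatible with this: if `rₖ = 0` then `∂ₖ = ∂ₖ₊₁`, and every
other face still contains `0`, so `dω` vanishes on such tuples as well. -/

open Finset

namespace RootCochain

section FaceFn

variable {A : Type*}

/-- Entry `k` of the `i`-th face of the tuple with entries `f`. -/
def faceFn [Add A] (f : ℕ → A) (i k : ℕ) : A :=
  if k + 1 < i then f k else if k + 1 = i then f k + f (k + 1) else f (k + 1)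

lemma faceFn_congr [Add A] {f g : ℕ → A} (i : ℕ) {k : ℕ} (h : ∀ m ≤ k + 1, f m = g m) :
    faceFn f i k = faceFn g i k := by
  simp only [faceFn, h k (by omega), h (k + 1) le_rfl]

lemma faceFn_faceFn [AddSemigroup A] (f : ℕ → A) {i j : ℕ} (hij : i < j) :
    faceFn (faceFn f j) i = faceFn (faceFn f i) (j - 1) := by
  funext k
  simp only [faceFn]
  split_ifs <;> first | rfl | omega | (congr 1 <;> omega) | exact (add_assoc ..).symm

lemma faceFn_succ_of_eq_zero [AddZeroClass A] {f : ℕ → A} {k : ℕ} (hk : f k = 0) :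
    faceFn f (k + 1) = faceFn f k := by
  funext m
  simp only [faceFn]
  split_ifs <;> first
    | rfl
    | omega
    | rw [show m + 1 = k by omega, hk, add_zero]
    | rw [show m = k by omega, hk, zero_add]

end FaceFn

/-- The term `(j, i)` with `i < j` cancels against `(i, j - 1)`. -/
lemma alternating_double_sum_eq_zero {M : Type*} [AddCommGroup M] (g : ℕ → ℕ → M) (n : ℕ)
    (hg : ∀ i j, i < j → j ≤ n → g j i = g i (j - 1)) :
    ∑ j ∈ range (n + 1), ∑ i ∈ range n, ((-1 : ℤ) ^ (j + i)) • g j i = 0 := by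
  rw [← sum_product']
  refine sum_involution (fun p _ => if p.2 < p.1 then (p.2, p.1 - 1) else (p.2 + 1, p.1))
    ?_ ?_ ?_ ?_
  · rintro ⟨j, i⟩ hp
    simp only [mem_product, mem_range] at hp
    dsimp only
    split_ifs with hij
    · obtain ⟨j, rfl⟩ : ∃ j', j = j' + 1 := ⟨j - 1, by omega⟩
      rw [hg i (j + 1) hij (by omega), Nat.add_sub_cancel, ← add_smul,
        show (-1 : ℤ) ^ (j + 1 + i) + (-1) ^ (i + j) = 0 by ring, zero_smul]
    · rw [hg j (i + 1) (by omega) (by omega), Nat.add_sub_cancel, ← add_smul,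
        show (-1 : ℤ) ^ (j + i) + (-1) ^ (i + 1 + j) = 0 by ring, zero_smul]
  · rintro ⟨j, i⟩ _ _
    split_ifs <;> simp only [ne_eq, Prod.mk.injEq] <;> omega
  · rintro ⟨j, i⟩ hp
    simp only [mem_product, mem_range] at hp ⊢
    split_ifs <;> omega
  · rintro ⟨j, i⟩ _
    dsimp only
    split_ifs <;> dsimp only at * <;> exact Prod.ext (by omega) (by omega)

variable {E : Type} [NormedAddCommGroup E] {M : Type} [AddCommGroup M]

/-- The `i`-th summand of the boundary: `∂ⁿ l = ∑ᵢ (-1)ⁱ • face l i`. -/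
def face (l : List E) (i : ℕ) : List E :=
  if i = 0 then l.tail else if i = l.length then l.dropLast else contractAt l (i - 1)

lemma length_face (l : List E) {i : ℕ} (hi : i ≤ l.length) :
    (face l i).length = l.length - 1 := by
  unfold face contractAt
  split_ifs <;> simp; omega

lemma getElem?_contractAt (l : List E) {j : ℕ} (hj : j + 1 < l.length) (k : ℕ) :
    (contractAt l j)[k]? = if k < j then l[k]?
      else if k = j then some (l.getD j 0 + l.getD (j + 1) 0) else l[k + 1]? := by
  have htake : (l.take j).length = j := by simp; omega
  unfold contractAt
  rcases lt_trichotomy k j with hk | rfl | hk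
  · simp [List.getElem?_append_left (htake ▸ hk), hk]
  · simp [htake]
  · rw [List.getElem?_append_right (by omega), htake, if_neg (by omega), if_neg (by omega),
      show k - j = k - j - 1 + 1 by omega, List.getElem?_cons_succ, List.getElem?_drop]
    congr 1
    omega

lemma getElem?_face (l : List E) {i : ℕ} (hi : i ≤ l.length) (k : ℕ) :
    (face l i)[k]? = if k + 1 < l.length then some (faceFn (l.getD · 0) i k) else none := by
  have hget : ∀ m < l.length, l[m]? = some (l.getD m 0) := fun m hm => by
    simp [List.getD_eq_getElem?_getD, hm]
  rcases eq_or_ne i 0 with rfl | h0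
  · rw [face, if_pos rfl, List.getElem?_tail]
    unfold faceFn
    split_ifs <;> first | omega | contradiction | exact hget _ ‹_› | simpa using ‹¬k + 1 < _›
  rcases eq_or_ne i l.length with rfl | hL
  · rw [face, if_neg h0, if_pos rfl, List.getElem?_dropLast]
    unfold faceFn
    split_ifs <;> first | omega | rfl | exact hget _ (by omega)
  · rw [face, if_neg h0, if_neg hL, getElem?_contractAt l (by omega)]
    unfold faceFn
    split_ifs <;> first
      | omega
      | exact hget _ (by omega)
      | simpa using ‹¬k + 1 < _›
      | (subst_vars; rfl)

lemma getD_face (l : List E) {i : ℕ} (hi : i ≤ l.length) {k : ℕ} (hk : k + 1 < l.length) :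
    (face l i).getD k 0 = faceFn (l.getD · 0) i k := by
  simp [List.getD_eq_getElem?_getD, getElem?_face l hi, hk]

lemma face_face (l : List E) {i j : ℕ} (hij : i < j) (hj : j ≤ l.length) :
    face (face l j) i = face (face l i) (j - 1) := by
  have hfj := length_face l hj
  have hfi := length_face l (hij.le.trans hj)
  refine List.ext_getElem? fun k => ?_
  rw [getElem?_face _ (by omega), getElem?_face _ (by omega), hfj, hfi]
  split_ifs with hk
  · rw [faceFn_congr i fun m _ => getD_face l hj (by omega),
      faceFn_congr (j - 1) fun m _ => getD_face l (hij.le.trans hj) (by omega), faceFn_faceFn _ hij]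
  · rfl

lemma face_succ_of_getD_eq_zero (l : List E) {k : ℕ} (hk : k < l.length) (h0 : l.getD k 0 = 0) :
    face l (k + 1) = face l k :=
  List.ext_getElem? fun m => by
    rw [getElem?_face l hk, getElem?_face l hk.le, faceFn_succ_of_eq_zero h0]

lemma zero_mem_face (l : List E) {i k : ℕ} (hi : i ≤ l.length) (hk : k < l.length)
    (h0 : l.getD k 0 = 0) (hik : i ≠ k) (hik' : i ≠ k + 1) : (0 : E) ∈ face l i := by
  rcases lt_or_gt_of_ne hik with h | h
  · apply List.mem_of_getElem? (i := k - 1)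
    rw [getElem?_face l hi, if_pos (by omega), faceFn, if_neg (by omega), if_neg (by omega),
      Nat.sub_add_cancel (by omega), h0]
  · apply List.mem_of_getElem? (i := k)
    rw [getElem?_face l hi, if_pos (by omega), faceFn, if_pos (by omega), h0]

lemma cobd_eq_sum_face (ω : List E → M) (l : List E) (hl : l ≠ []) :
    cobd ω l = ∑ i ∈ range (l.length + 1), ((-1 : ℤ) ^ i) • chainEv ω (face l i) := by
  obtain ⟨m, hm⟩ : ∃ m, l.length = m + 1 :=
    Nat.exists_eq_add_one_of_ne_zero (mt List.length_eq_zero_iff.1 hl)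
  rw [cobd, hm, sum_range_succ, sum_range_succ', Nat.add_sub_cancel]
  have hmid : ∀ i ∈ range m, face l (i + 1) = contractAt l i := fun i hi => by
    simp [face, hm, (mem_range.1 hi).ne]
  rw [sum_congr rfl fun i hi => by rw [← hmid i hi]]
  have hfirst : face l 0 = l.tail := if_pos rfl
  have hlast : face l (m + 1) = l.dropLast := by simp [face, hm]
  simp only [hfirst, hlast, pow_zero, one_smul, pow_succ, mul_neg_one, neg_smul]
  abel

lemma cobd_eq_zero_of_zero_mem (ω : List E → M) {l : List E} (h : (0 : E) ∈ l) :
    cobd ω l = 0 := by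
  obtain ⟨k, hk, hk0⟩ := List.getElem_of_mem h
  have h0 : l.getD k 0 = 0 := by rw [List.getD_eq_getElem _ _ hk, hk0]
  rw [cobd_eq_sum_face ω l (List.ne_nil_of_mem h),
    sum_eq_add_of_mem k (k + 1) (by simp; omega) (by simp; omega) k.succ_ne_self.symm
      fun i hi hik => by
        rw [chainEv, if_pos (zero_mem_face l (by simp at hi; omega) hk h0 hik.1 hik.2), smul_zero],
    face_succ_of_getD_eq_zero l hk h0, pow_succ, mul_neg_one, neg_smul, add_neg_cancel]

lemma cobd_eq_zero_of_length_le_one (ω : List E → M) {l : List E} (hl : l.length ≤ 1) :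
    cobd ω l = 0 := by
  match l, hl with
  | [], _ => simp [cobd]
  | [_], _ => simp [cobd]

lemma chainEv_cobd (ω : List E → M) : chainEv (cobd ω) = cobd ω := by
  funext l
  unfold chainEv
  split_ifs with h
  · exact (cobd_eq_zero_of_zero_mem ω h).symm
  · rfl

theorem cobd_cobd (ω : List E → M) (l : List E) : cobd (cobd ω) l = 0 := by
  rcases le_or_gt l.length 1 with hl | hl
  · exact cobd_eq_zero_of_length_le_one _ hl
  have hface : ∀ j ∈ range (l.length + 1), cobd ω (face l j) =
      ∑ i ∈ range l.length, ((-1 : ℤ) ^ i) • chainEv ω (face (face l j) i) := fun j hj => by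
    have hlen := length_face l (Nat.lt_succ_iff.1 (mem_range.1 hj))
    rw [cobd_eq_sum_face ω _ (List.ne_nil_of_length_pos (by omega)), hlen,
      Nat.sub_add_cancel hl.le]
  rw [cobd_eq_sum_face _ l (List.ne_nil_of_length_pos (by omega)), chainEv_cobd,
    sum_congr rfl fun j hj => by rw [hface j hj]]
  simp only [smul_sum, smul_smul, ← pow_add]
  exact alternating_double_sum_eq_zero (fun j i => chainEv ω (face (face l j) i)) _
    fun i j hij hj => by rw [face_face l hij hj]

end RootCochain

theorem coboundary_squared_eq_zero_general
    {V : Type} [NormedAddCommGroup V]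
    (M : Type) [AddCommGroup M]
    (ω : List V → M) (l : List V) :
    cobd (cobd ω) l = 0 :=
  RootCochain.cobd_cobd ω l

/-- The coboundary operator on root-system cochains with values in a
ℤ-module `M` satisfies `dⁿ⁺¹ ∘ dⁿ = 0` as a map `Cⁿ(Φ,M) → Cⁿ⁺²(Φ,M)`, for every `n ≥ 1`;
that is, `(d(dω))` vanishes on every chain in `T_{n+2}(Φ)`. -/
theorem coboundary_squared_eq_zero
    {V : Type} [NormedAddCommGroup V] [InnerProductSpace ℝ V] [FiniteDimensional ℝ V]
    (Φ : ReducedRootSystem V) (M : Type) [AddCommGroup M] (n : ℕ) (hn : 1 ≤ n)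
    (ω : List V → M) (l : List V) (hlen : l.length = n + 2) (hl : IsRootChain Φ l) :
    cobd (cobd ω) l = 0 :=
  coboundary_squared_eq_zero_general M ω l
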